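/- Polynomial-time computability implies computability (the rigorous core of the paper's Corollary (b), that a Boolean function not Turing-computable cannot lie in the complexity class P): if a function f : ℕ → Bool is computable in polynomial time by a two-stack Turing machine in Mathlib's sense (there exists a Turing.TM2ComputableInPolyTime witness with respect to the standard finite encodings of ℕ and Bool), then f is computable, i.e., Computable f holds. -/

import Mathlib

open Turing Computability

namespace PTC

noncomputable section

open scoped Classical

variable (tm : Turing.FinTM2)

instance : Fintype tm.K := tm.kFin
instance : DecidableEq tm.K := tm.kDecidableEq
instance : Fintype tm.Λ := tm.ΛFin
instance : Fintype tm.σ := tm.σFin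
instance : Fintype (tm.Γ tm.k₀) := tm.Γk₀Fin

/-- values possibly pushed onto stack `k` by statement `q` -/
def pushVals : Turing.TM2.Stmt tm.Γ tm.Λ tm.σ → ∀ k : tm.K, List (tm.Γ k)
  | .push k' f q, k =>
      (if h : k' = k then (Finset.univ : Finset tm.σ).toList.map (fun s => h ▸ f s) else [])
        ++ pushVals q k
  | .peek _ _ q, k => pushVals q k
  | .pop _ _ q, k => pushVals q k
  | .load _ q, k => pushVals q k
  | .branch _ q₁ q₂, k => pushVals q₁ k ++ pushVals q₂ k
  | .goto _, _ => []
  | .halt, _ => []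

/-- all stack values that can ever occur on stack `k` -/
def elems (k : tm.K) : List (tm.Γ k) :=
  (if h : tm.k₀ = k then ((Finset.univ : Finset (tm.Γ tm.k₀)).toList).map (fun x => h ▸ x) else [])
    ++ (Finset.univ : Finset tm.Λ).toList.flatMap (fun l => pushVals tm (tm.m l) k)

theorem mem_elems_k₀ (x : tm.Γ tm.k₀) : x ∈ elems tm tm.k₀ := by
  unfold elems
  rw [dif_pos rfl]
  apply List.mem_append_left
  exact List.mem_map.2 ⟨x, by simp, rfl⟩

theorem pushVals_subset_elems (l : tm.Λ) (k : tm.K) :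
    ∀ x ∈ pushVals tm (tm.m l) k, x ∈ elems tm k := by
  intro x hx
  unfold elems
  apply List.mem_append_right
  exact List.mem_flatMap.2 ⟨l, by simp, hx⟩

/-- a statement all of whose pushed values lie in `elems` -/
def GoodStmt : Turing.TM2.Stmt tm.Γ tm.Λ tm.σ → Prop
  | .push k f q => (∀ s, f s ∈ elems tm k) ∧ GoodStmt q
  | .peek _ _ q => GoodStmt q
  | .pop _ _ q => GoodStmt q
  | .load _ q => GoodStmt q
  | .branch _ q₁ q₂ => GoodStmt q₁ ∧ GoodStmt q₂
  | .goto _ => True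
  | .halt => True

theorem goodStmt_of_sub (q : Turing.TM2.Stmt tm.Γ tm.Λ tm.σ)
    (hq : ∀ k, ∀ x ∈ pushVals tm q k, x ∈ elems tm k) : GoodStmt tm q := by
  induction q with
  | push k f q ih =>
    refine ⟨fun s => hq k _ ?_, ih fun k' x hx => hq k' x ?_⟩
    · unfold pushVals
      rw [dif_pos rfl]
      exact List.mem_append_left _ (List.mem_map.2 ⟨s, by simp, rfl⟩)
    · unfold pushVals
      exact List.mem_append_right _ hx
  | peek k f q ih => exact ih fun k' x hx => hq k' x hx
  | pop k f q ih => exact ih fun k' x hx => hq k' x hx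
  | load a q ih => exact ih fun k' x hx => hq k' x hx
  | branch p q₁ q₂ ih₁ ih₂ =>
    exact ⟨ih₁ fun k' x hx => hq k' x (List.mem_append_left _ hx),
      ih₂ fun k' x hx => hq k' x (List.mem_append_right _ hx)⟩
  | goto f => trivial
  | halt => trivial

theorem goodStmt_m (l : tm.Λ) : GoodStmt tm (tm.m l) :=
  goodStmt_of_sub tm _ (fun k x hx => pushVals_subset_elems tm l k x hx)

/-- the finite symbol type -/
def Δ : Type := Option (Σ k : tm.K, {x // x ∈ elems tm k})

instance : Fintype (Δ tm) := by
  unfold Δ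
  infer_instance

def toΔ (k : tm.K) (x : tm.Γ k) : Δ tm :=
  if h : x ∈ elems tm k then some ⟨k, x, h⟩ else none

def fromΔ (k : tm.K) : Δ tm → Option (tm.Γ k) :=
  fun d => d.bind fun p => if h : p.1 = k then some (h ▸ p.2.1) else none

theorem fromΔ_toΔ {k : tm.K} {x : tm.Γ k} (h : x ∈ elems tm k) :
    fromΔ tm k (toΔ tm k x) = some x := by
  unfold toΔ fromΔ
  erw [dif_pos h]
  exact dif_pos rfl

theorem toΔ_inj {k : tm.K} {x y : tm.Γ k} (hx : x ∈ elems tm k)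
    (hxy : toΔ tm k x = toΔ tm k y) : x = y := by
  have := fromΔ_toΔ tm hx
  rw [hxy] at this
  unfold toΔ fromΔ at this
  by_cases hy : y ∈ elems tm k
  · erw [dif_pos hy] at this
    simp only [Option.bind_some, dif_pos rfl] at this
    exact (Option.some_injective _ this).symm
  · erw [dif_neg hy] at this
    simp at this

/-! ### Transport to `Fin` types -/

def nK : ℕ := Fintype.card tm.K
def eK : tm.K ≃ Fin (nK tm) := Fintype.equivFin _
def nΛ : ℕ := Fintype.card tm.Λ
def eΛ : tm.Λ ≃ Fin (nΛ tm) := Fintype.equivFin _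
def nσ : ℕ := Fintype.card tm.σ
def eσ : tm.σ ≃ Fin (nσ tm) := Fintype.equivFin _
def nΔ : ℕ := Fintype.card (Δ tm)
def eΔ : Δ tm ≃ Fin (nΔ tm) := Fintype.equivFin _

/-- the `Fin`-level configuration type -/
abbrev Cfg' : Type :=
  Option (Fin (nΛ tm)) × Fin (nσ tm) × (Fin (nK tm) → List (Fin (nΔ tm)))

def encΔ (k : tm.K) (x : tm.Γ k) : Fin (nΔ tm) := eΔ tm (toΔ tm k x)

theorem encΔ_inj {k : tm.K} {x y : tm.Γ k} (hx : x ∈ elems tm k)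
    (hxy : encΔ tm k x = encΔ tm k y) : x = y :=
  toΔ_inj tm hx ((eΔ tm).injective hxy)

def encS (S : ∀ k, List (tm.Γ k)) : Fin (nK tm) → List (Fin (nΔ tm)) :=
  fun i => (S ((eK tm).symm i)).map (encΔ tm ((eK tm).symm i))

def encC (c : Turing.TM2.Cfg tm.Γ tm.Λ tm.σ) : Cfg' tm :=
  (c.l.map (eΛ tm), eσ tm c.var, encS tm c.stk)

theorem encS_apply (S : ∀ k, List (tm.Γ k)) (k : tm.K) :
    encS tm S (eK tm k) = (S k).map (encΔ tm k) := by
  unfold encS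
  have h : (eK tm).symm (eK tm k) = k := (eK tm).symm_apply_apply k
  rw [h]

theorem encS_update (S : ∀ k, List (tm.Γ k)) (k : tm.K) (L : List (tm.Γ k)) :
    encS tm (Function.update S k L) = Function.update (encS tm S) (eK tm k) (L.map (encΔ tm k)) := by
  funext i
  by_cases h : i = eK tm k
  · subst h
    rw [Function.update_self, encS_apply, Function.update_self]
  · rw [Function.update_of_ne h]
    unfold encS
    have h2 : (eK tm).symm i ≠ k := by
      intro h3
      exact h (by rw [← h3, Equiv.apply_symm_apply])
    rw [Function.update_of_ne h2]

/-! ### Fin-level operations -/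

def pushF (k : tm.K) (f : tm.σ → tm.Γ k) (v : Fin (nσ tm)) : Fin (nΔ tm) :=
  encΔ tm k (f ((eσ tm).symm v))

def peekF (k : tm.K) (f : tm.σ → Option (tm.Γ k) → tm.σ)
    (z : Fin (nσ tm) × Option (Fin (nΔ tm))) : Fin (nσ tm) :=
  eσ tm (f ((eσ tm).symm z.1) (z.2.bind fun d => fromΔ tm k ((eΔ tm).symm d)))

def loadF (a : tm.σ → tm.σ) (v : Fin (nσ tm)) : Fin (nσ tm) :=
  eσ tm (a ((eσ tm).symm v))

def branchF (p : tm.σ → Bool) (v : Fin (nσ tm)) : Bool := p ((eσ tm).symm v)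

def gotoF (g : tm.σ → tm.Λ) (v : Fin (nσ tm)) : Fin (nΛ tm) :=
  eΛ tm (g ((eσ tm).symm v))

/-- the `Fin`-level simulation of `stepAux` -/
def simAux : Turing.TM2.Stmt tm.Γ tm.Λ tm.σ →
    Fin (nσ tm) → (Fin (nK tm) → List (Fin (nΔ tm))) → Cfg' tm
  | .push k f q, v, S =>
      simAux q v (Function.update S (eK tm k) (pushF tm k f v :: S (eK tm k)))
  | .peek k f q, v, S => simAux q (peekF tm k f (v, (S (eK tm k)).head?)) S
  | .pop k f q, v, S =>
      simAux q (peekF tm k f (v, (S (eK tm k)).head?))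
        (Function.update S (eK tm k) (S (eK tm k)).tail)
  | .load a q, v, S => simAux q (loadF tm a v) S
  | .branch p q₁ q₂, v, S => bif branchF tm p v then simAux q₁ v S else simAux q₂ v S
  | .goto g, v, S => (some (gotoF tm g v), v, S)
  | .halt, v, S => (none, v, S)

def simStep : Cfg' tm → Cfg' tm := fun c =>
  match c.1 with
  | none => c
  | some l => simAux tm (tm.m ((eΛ tm).symm l)) c.2.1 c.2.2

def realStep (c : Turing.TM2.Cfg tm.Γ tm.Λ tm.σ) : Turing.TM2.Cfg tm.Γ tm.Λ tm.σ :=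
  (Turing.TM2.step tm.m c).getD c

def GoodStk (S : ∀ k, List (tm.Γ k)) : Prop := ∀ k, ∀ x ∈ S k, x ∈ elems tm k

theorem simAux_spec (q : Turing.TM2.Stmt tm.Γ tm.Λ tm.σ) (hq : GoodStmt tm q)
    (v : tm.σ) (S : ∀ k, List (tm.Γ k)) (hS : GoodStk tm S) :
    GoodStk tm (Turing.TM2.stepAux q v S).stk ∧
      simAux tm q (eσ tm v) (encS tm S) = encC tm (Turing.TM2.stepAux q v S) := by
  induction q generalizing v S with
  | push k f q ih =>
    obtain ⟨hf, hq⟩ := hq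
    have hS' : GoodStk tm (Function.update S k (f v :: S k)) := by
      intro k' x hx
      by_cases h : k' = k
      · subst h
        rw [Function.update_self] at hx
        rcases List.mem_cons.1 hx with h | h
        · exact h ▸ hf v
        · exact hS k' x h
      · rw [Function.update_of_ne h] at hx
        exact hS k' x hx
    refine ⟨(ih hq v _ hS').1, ?_⟩
    show simAux tm q (eσ tm v) _ = _
    rw [show (Function.update (encS tm S) (eK tm k)
        (pushF tm k f (eσ tm v) :: encS tm S (eK tm k)))
        = encS tm (Function.update S k (f v :: S k)) from ?_]
    · exact (ih hq v _ hS').2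
    · rw [encS_update, encS_apply, List.map_cons]
      unfold pushF
      rw [(eσ tm).symm_apply_apply]
  | peek k f q ih =>
    refine ⟨(ih hq _ S hS).1, ?_⟩
    show simAux tm q (peekF tm k f (eσ tm v, (encS tm S (eK tm k)).head?)) (encS tm S) = _
    rw [show peekF tm k f (eσ tm v, (encS tm S (eK tm k)).head?)
        = eσ tm (f v (S k).head?) from ?_]
    · exact (ih hq _ S hS).2
    · unfold peekF
      rw [(eσ tm).symm_apply_apply, encS_apply]
      congr 2
      cases hl : S k with
      | nil => rfl
      | cons a t =>
        show ((encΔ tm k a :: t.map (encΔ tm k)).head?).bind _ = some a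
        show (fromΔ tm k ((eΔ tm).symm (eΔ tm (toΔ tm k a)))) = some a
        rw [(eΔ tm).symm_apply_apply]
        exact fromΔ_toΔ tm (hS k a (hl ▸ List.mem_cons_self))
  | pop k f q ih =>
    have hS' : GoodStk tm (Function.update S k (S k).tail) := by
      intro k' x hx
      by_cases h : k' = k
      · subst h
        rw [Function.update_self] at hx
        exact hS k' x (List.mem_of_mem_tail hx)
      · rw [Function.update_of_ne h] at hx
        exact hS k' x hx
    refine ⟨(ih hq _ _ hS').1, ?_⟩
    show simAux tm q (peekF tm k f (eσ tm v, (encS tm S (eK tm k)).head?))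
      (Function.update (encS tm S) (eK tm k) (encS tm S (eK tm k)).tail) = _
    rw [show peekF tm k f (eσ tm v, (encS tm S (eK tm k)).head?)
        = eσ tm (f v (S k).head?) from ?_,
      show Function.update (encS tm S) (eK tm k) (encS tm S (eK tm k)).tail
        = encS tm (Function.update S k (S k).tail) from ?_]
    · exact (ih hq _ _ hS').2
    · rw [encS_update, encS_apply, List.map_tail]
    · unfold peekF
      rw [(eσ tm).symm_apply_apply, encS_apply]
      congr 2
      cases hl : S k with
      | nil => rfl
      | cons a t =>
        show (fromΔ tm k ((eΔ tm).symm (eΔ tm (toΔ tm k a)))) = some a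
        rw [(eΔ tm).symm_apply_apply]
        exact fromΔ_toΔ tm (hS k a (hl ▸ List.mem_cons_self))
  | load a q ih =>
    refine ⟨(ih hq _ S hS).1, ?_⟩
    show simAux tm q (loadF tm a (eσ tm v)) (encS tm S) = _
    rw [show loadF tm a (eσ tm v) = eσ tm (a v) from by
      unfold loadF; rw [(eσ tm).symm_apply_apply]]
    exact (ih hq _ S hS).2
  | branch p q₁ q₂ ih₁ ih₂ =>
    obtain ⟨hq₁, hq₂⟩ := hq
    have hb : branchF tm p (eσ tm v) = p v := by
      unfold branchF; rw [(eσ tm).symm_apply_apply]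
    show GoodStk tm (Turing.TM2.stepAux (Turing.TM2.Stmt.branch p q₁ q₂) v S).stk ∧
      (bif branchF tm p (eσ tm v) then simAux tm q₁ (eσ tm v) (encS tm S)
        else simAux tm q₂ (eσ tm v) (encS tm S)) = _
    rw [hb]
    cases hpv : p v
    · simpa only [Turing.TM2.stepAux, hpv, cond_false] using ih₂ hq₂ v S hS
    · simpa only [Turing.TM2.stepAux, hpv, cond_true] using ih₁ hq₁ v S hS
  | goto g =>
    refine ⟨hS, ?_⟩
    show (some (gotoF tm g (eσ tm v)), eσ tm v, encS tm S) = _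
    unfold gotoF
    rw [(eσ tm).symm_apply_apply]
    rfl
  | halt => exact ⟨hS, rfl⟩

theorem simStep_spec (c : Turing.TM2.Cfg tm.Γ tm.Λ tm.σ) (hc : GoodStk tm c.stk) :
    GoodStk tm (realStep tm c).stk ∧ simStep tm (encC tm c) = encC tm (realStep tm c) := by
  obtain ⟨l, v, S⟩ := c
  cases l with
  | none =>
    refine ⟨hc, ?_⟩
    show simStep tm (none, _, _) = _
    rfl
  | some l =>
    have hstep : realStep tm ⟨some l, v, S⟩ = Turing.TM2.stepAux (tm.m l) v S := rfl
    rw [hstep]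
    have h1 := simAux_spec tm (tm.m l) (goodStmt_m tm l) v S hc
    refine ⟨h1.1, ?_⟩
    show simAux tm (tm.m ((eΛ tm).symm (eΛ tm l))) (eσ tm v) (encS tm S) = _
    rw [(eΛ tm).symm_apply_apply]
    exact h1.2

theorem simStep_iterate (n : ℕ) (c : Turing.TM2.Cfg tm.Γ tm.Λ tm.σ) (hc : GoodStk tm c.stk) :
    GoodStk tm ((realStep tm)^[n] c).stk ∧
      (simStep tm)^[n] (encC tm c) = encC tm ((realStep tm)^[n] c) := by
  induction n generalizing c with
  | zero => exact ⟨hc, rfl⟩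
  | succ n ih =>
    rw [Function.iterate_succ_apply, Function.iterate_succ_apply]
    obtain ⟨h1, h2⟩ := simStep_spec tm c hc
    obtain ⟨h3, h4⟩ := ih (realStep tm c) h1
    exact ⟨h3, by rw [h2, h4]⟩

theorem flipbind_none (n : ℕ) :
    (flip bind (Turing.TM2.step tm.m))^[n] (none : Option (Turing.TM2.Cfg tm.Γ tm.Λ tm.σ))
      = none := by
  induction n with
  | zero => rfl
  | succ n ih => rw [Function.iterate_succ_apply]; exact ih

theorem realStep_of_evalsTo {n : ℕ} {c d : Turing.TM2.Cfg tm.Γ tm.Λ tm.σ}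
    (h : (flip bind (Turing.TM2.step tm.m))^[n] (some c) = some d) :
    (realStep tm)^[n] c = d := by
  induction n generalizing c with
  | zero => exact Option.some_injective _ h
  | succ n ih =>
    rw [Function.iterate_succ_apply] at h
    have hb : flip bind (Turing.TM2.step tm.m) (some c) = Turing.TM2.step tm.m c := rfl
    rw [hb] at h
    cases hc : Turing.TM2.step tm.m c with
    | none => rw [hc, flipbind_none] at h; exact absurd h (by simp)
    | some c' =>
      rw [hc] at h
      rw [Function.iterate_succ_apply]
      have : realStep tm c = c' := by unfold realStep; rw [hc]; rfl
      rw [this]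
      exact ih h

theorem realStep_halt {d : Turing.TM2.Cfg tm.Γ tm.Λ tm.σ}
    (hd : Turing.TM2.step tm.m d = none) (m : ℕ) : (realStep tm)^[m] d = d := by
  apply Function.iterate_fixed
  unfold realStep; rw [hd]; rfl

theorem realStep_of_evalsTo_le {n m : ℕ} {c d : Turing.TM2.Cfg tm.Γ tm.Λ tm.σ}
    (h : (flip bind (Turing.TM2.step tm.m))^[n] (some c) = some d)
    (hd : Turing.TM2.step tm.m d = none) (hnm : n ≤ m) : (realStep tm)^[m] c = d := by
  have h1 := realStep_of_evalsTo tm h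
  rw [← Nat.sub_add_cancel hnm, Function.iterate_add_apply, h1, realStep_halt tm hd]

theorem initList_stk₀ (L : List (tm.Γ tm.k₀)) :
    (Turing.initList tm L).stk tm.k₀ = L := by
  show dite _ _ _ = L
  rw [dif_pos rfl]
  rfl

theorem initList_stk_ne (L : List (tm.Γ tm.k₀)) {k : tm.K} (hk : k ≠ tm.k₀) :
    (Turing.initList tm L).stk k = [] := by
  show dite _ _ _ = []
  rw [dif_neg hk]

theorem haltList_stk₁ (L : List (tm.Γ tm.k₁)) :
    (Turing.haltList tm L).stk tm.k₁ = L := by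
  show dite _ _ _ = L
  rw [dif_pos rfl]
  rfl

theorem goodStk_init (L : List (tm.Γ tm.k₀)) : GoodStk tm (Turing.initList tm L).stk := by
  intro k x hx
  by_cases h : k = tm.k₀
  · subst h
    rw [initList_stk₀] at hx
    exact mem_elems_k₀ tm x
  · rw [initList_stk_ne tm L h] at hx
    exact absurd hx (List.not_mem_nil)

theorem encC_init (L : List (tm.Γ tm.k₀)) :
    encC tm (Turing.initList tm L) =
      (some (eΛ tm tm.main), eσ tm tm.initialState,
        fun i => if i = eK tm tm.k₀ then L.map (encΔ tm tm.k₀) else []) := by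
  unfold encC
  refine congrArg₂ _ rfl (congrArg₂ _ rfl ?_)
  funext i
  by_cases h : i = eK tm tm.k₀
  · subst h
    rw [encS_apply, if_pos rfl, initList_stk₀]
  · rw [if_neg h]
    unfold encS
    have h2 : (eK tm).symm i ≠ tm.k₀ := by
      intro h3
      exact h (by rw [← h3, Equiv.apply_symm_apply])
    rw [initList_stk_ne tm L h2]
    rfl

/-! ### Primitive recursiveness of the simulation -/

theorem primrec_update {α γ : Type} [Primcodable α] [Primcodable γ] {n : ℕ} (j : Fin n)
    {F : α → Fin n → γ} {x : α → γ} (hF : Primrec F) (hx : Primrec x) :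
    Primrec fun a => Function.update (F a) j (x a) := by
  classical
  have h2 : Primrec₂ fun a (i : Fin n) => if i = j then x a else F a i :=
    Primrec.ite (Primrec.eq.comp Primrec.snd (Primrec.const j)) (hx.comp Primrec.fst)
      (Primrec.fin_app.comp (hF.comp Primrec.fst) Primrec.snd)
  exact (Primrec.fin_curry.2 h2).of_eq fun a => funext fun i =>
    (Function.update_apply (F a) j (x a) i).symm

theorem simAux_primrec (q : Turing.TM2.Stmt tm.Γ tm.Λ tm.σ) :
    Primrec fun p : Fin (nσ tm) × (Fin (nK tm) → List (Fin (nΔ tm))) =>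
      simAux tm q p.1 p.2 := by
  induction q with
  | push k f q ih =>
    have happ : Primrec fun p : Fin (nσ tm) × (Fin (nK tm) → List (Fin (nΔ tm))) =>
        p.2 (eK tm k) := Primrec.fin_app.comp Primrec.snd (Primrec.const _)
    have hnew : Primrec fun p : Fin (nσ tm) × (Fin (nK tm) → List (Fin (nΔ tm))) =>
        pushF tm k f p.1 :: p.2 (eK tm k) :=
      Primrec.list_cons.comp ((Primrec.dom_finite (pushF tm k f)).comp Primrec.fst) happ
    exact ih.comp (Primrec.fst.pair (primrec_update _ Primrec.snd hnew))
  | peek k f q ih =>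
    have happ : Primrec fun p : Fin (nσ tm) × (Fin (nK tm) → List (Fin (nΔ tm))) =>
        p.2 (eK tm k) := Primrec.fin_app.comp Primrec.snd (Primrec.const _)
    have hv : Primrec fun p : Fin (nσ tm) × (Fin (nK tm) → List (Fin (nΔ tm))) =>
        peekF tm k f (p.1, (p.2 (eK tm k)).head?) :=
      (Primrec.dom_finite (peekF tm k f)).comp
        (Primrec.fst.pair (Primrec.list_head?.comp happ))
    exact ih.comp (hv.pair Primrec.snd)
  | pop k f q ih =>
    have happ : Primrec fun p : Fin (nσ tm) × (Fin (nK tm) → List (Fin (nΔ tm))) =>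
        p.2 (eK tm k) := Primrec.fin_app.comp Primrec.snd (Primrec.const _)
    have hv : Primrec fun p : Fin (nσ tm) × (Fin (nK tm) → List (Fin (nΔ tm))) =>
        peekF tm k f (p.1, (p.2 (eK tm k)).head?) :=
      (Primrec.dom_finite (peekF tm k f)).comp
        (Primrec.fst.pair (Primrec.list_head?.comp happ))
    exact ih.comp (hv.pair (primrec_update _ Primrec.snd (Primrec.list_tail.comp happ)))
  | load a q ih =>
    exact ih.comp (((Primrec.dom_finite (loadF tm a)).comp Primrec.fst).pair Primrec.snd)
  | branch p q₁ q₂ ih₁ ih₂ =>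
    exact Primrec.cond ((Primrec.dom_finite (branchF tm p)).comp Primrec.fst) ih₁ ih₂
  | goto g =>
    exact (Primrec.option_some.comp
      ((Primrec.dom_finite (gotoF tm g)).comp Primrec.fst)).pair
      (Primrec.fst.pair Primrec.snd)
  | halt => exact (Primrec.const none).pair (Primrec.fst.pair Primrec.snd)

theorem simStep_primrec : Primrec (simStep tm) := by
  have hdisp : Primrec₂ fun (l : Fin (nΛ tm))
      (p : Fin (nσ tm) × (Fin (nK tm) → List (Fin (nΔ tm)))) =>
      simAux tm (tm.m ((eΛ tm).symm l)) p.1 p.2 :=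
    Primrec.fin_curry₁.2 fun l => simAux_primrec tm _
  refine (Primrec.option_casesOn (o := fun c : Cfg' tm => c.1) (f := @id (Cfg' tm))
    (g := fun c l => simAux tm (tm.m ((eΛ tm).symm l)) c.2.1 c.2.2)
    Primrec.fst Primrec.id ?_).of_eq ?_
  · exact hdisp.comp Primrec.snd (Primrec.snd.comp Primrec.fst)
  · intro c
    obtain ⟨l, v, S⟩ := c
    cases l <;> rfl

/-! ### Polynomial evaluation and binary encoding -/

theorem polyEval_primrec (p : Polynomial ℕ) : Primrec fun x : ℕ => p.eval x := by
  induction p using Polynomial.induction_on with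
  | C a => exact (Primrec.const a).of_eq fun x => (Polynomial.eval_C).symm
  | add p q hp hq =>
    exact (Primrec.nat_add.comp hp hq).of_eq fun x => (Polynomial.eval_add).symm
  | monomial n a ih =>
    exact (Primrec.nat_mul.comp ih Primrec.id).of_eq fun x => by
      simp [pow_succ, mul_assoc]

theorem polyEval_mono (p : Polynomial ℕ) : Monotone fun x : ℕ => p.eval x := by
  induction p using Polynomial.induction_on with
  | C a => exact fun x y _ => by simp
  | add p q hp hq =>
    intro x y hxy
    simp only [Polynomial.eval_add]
    exact Nat.add_le_add (hp hxy) (hq hxy)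
  | monomial n a ih =>
    intro x y hxy
    simp only [Polynomial.eval_mul, Polynomial.eval_C, Polynomial.eval_pow, Polynomial.eval_X]
    exact Nat.mul_le_mul_left _ (Nat.pow_le_pow_left hxy _)

theorem encodeNat_posNum (p : PosNum) :
    Computability.encodeNat (p : ℕ) = Computability.encodePosNum p := by
  unfold Computability.encodeNat
  rw [PosNum.of_to_nat]
  rfl

theorem encodeNat_zero : Computability.encodeNat 0 = [] := by
  unfold Computability.encodeNat
  rw [Nat.cast_zero]
  rfl

theorem exists_posNum (m : ℕ) :
    ∃ p : PosNum, ((m + 1 : ℕ) : Num) = Num.pos p ∧ (p : ℕ) = m + 1 := by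
  cases hq : ((m + 1 : ℕ) : Num) with
  | zero =>
    exfalso
    have h2 := Num.to_of_nat (m + 1)
    rw [hq] at h2
    have h3 : (0 : ℕ) = m + 1 := h2
    omega
  | pos p =>
    refine ⟨p, rfl, ?_⟩
    have h2 := Num.to_of_nat (m + 1)
    rw [hq] at h2
    exact h2

theorem encodePosNum_eq (p : PosNum) :
    Computability.encodePosNum p =
      decide ((p : ℕ) % 2 = 1) :: Computability.encodeNat ((p : ℕ) / 2) := by
  cases p with
  | one =>
    show [true] = decide (((1 : PosNum) : ℕ) % 2 = 1) :: Computability.encodeNat (((1 : PosNum) : ℕ) / 2)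
    rw [PosNum.cast_one]
    simp [encodeNat_zero]
  | bit0 q =>
    have hc : ((q.bit0 : PosNum) : ℕ) = (q : ℕ) + (q : ℕ) := PosNum.cast_bit0 q
    have hq1 : 1 ≤ (q : ℕ) := PosNum.to_nat_pos q
    have h2 : ¬(((q : ℕ) + (q : ℕ)) % 2 = 1) := by omega
    have h3 : ((q : ℕ) + (q : ℕ)) / 2 = (q : ℕ) := by omega
    show false :: Computability.encodePosNum q = _
    rw [hc, h3, decide_eq_false h2, encodeNat_posNum]
  | bit1 q =>
    have hc : ((q.bit1 : PosNum) : ℕ) = (q : ℕ) + (q : ℕ) + 1 := PosNum.cast_bit1 q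
    have h2 : (((q : ℕ) + (q : ℕ) + 1) % 2 = 1) := by omega
    have h3 : ((q : ℕ) + (q : ℕ) + 1) / 2 = (q : ℕ) := by omega
    show true :: Computability.encodePosNum q = _
    rw [hc, h3, decide_eq_true h2, encodeNat_posNum]

theorem encodeNat_eq (n : ℕ) :
    Computability.encodeNat n =
      if n = 0 then [] else decide (n % 2 = 1) :: Computability.encodeNat (n / 2) := by
  rcases n with _ | m
  · simp [encodeNat_zero]
  · rw [if_neg (Nat.succ_ne_zero m)]
    obtain ⟨p, hp, hpn⟩ := exists_posNum m
    have h1 : Computability.encodeNat (m + 1) = Computability.encodePosNum p := by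
      unfold Computability.encodeNat
      rw [hp]
      rfl
    rw [h1, encodePosNum_eq, hpn]

theorem encodePosNum_length_le (p : PosNum) :
    (Computability.encodePosNum p).length ≤ (p : ℕ) := by
  induction p with
  | one =>
    show 1 ≤ ((PosNum.one : PosNum) : ℕ)
    rw [PosNum.cast_one']
  | bit0 q ih =>
    have hc : ((q.bit0 : PosNum) : ℕ) = (q : ℕ) + (q : ℕ) := PosNum.cast_bit0 q
    have hq1 : 1 ≤ (q : ℕ) := PosNum.to_nat_pos q
    show (Computability.encodePosNum q).length + 1 ≤ _
    rw [hc]; omega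
  | bit1 q ih =>
    have hc : ((q.bit1 : PosNum) : ℕ) = (q : ℕ) + (q : ℕ) + 1 := PosNum.cast_bit1 q
    have hq1 : 1 ≤ (q : ℕ) := PosNum.to_nat_pos q
    show (Computability.encodePosNum q).length + 1 ≤ _
    rw [hc]; omega

theorem encodeNat_length_le (n : ℕ) : (Computability.encodeNat n).length ≤ n + 1 := by
  rcases n with _ | m
  · simp [encodeNat_zero]
  · obtain ⟨p, hp, hpn⟩ := exists_posNum m
    have h1 : Computability.encodeNat (m + 1) = Computability.encodePosNum p := by
      unfold Computability.encodeNat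
      rw [hp]
      rfl
    rw [h1]
    calc (Computability.encodePosNum p).length ≤ (p : ℕ) := encodePosNum_length_le p
    _ ≤ m + 1 + 1 := by omega

theorem encodeNat_primrec : Primrec Computability.encodeNat := by
  have h := Primrec.nat_strong_rec (fun (_ : Unit) n => Computability.encodeNat n)
    (g := fun (_ : Unit) (l : List (List Bool)) =>
      if l.length = 0 then some [] else
        some ((decide (l.length % 2 = 1)) :: l.getD (l.length / 2) [])) ?_ ?_
  · exact h.comp (Primrec.const ()) Primrec.id
  · have hlen : Primrec fun p : Unit × List (List Bool) => p.2.length :=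
      Primrec.list_length.comp Primrec.snd
    exact Primrec.ite (Primrec.eq.comp hlen (Primrec.const 0))
      (Primrec.const (some []))
      (Primrec.option_some.comp (Primrec.list_cons.comp
        (Primrec.eq.comp (Primrec.nat_mod.comp hlen (Primrec.const 2)) (Primrec.const 1)).decide
        ((Primrec.list_getD []).comp Primrec.snd
          (Primrec.nat_div.comp hlen (Primrec.const 2)))))
  · intro _ n
    simp only [List.length_map, List.length_range]
    by_cases h0 : n = 0
    · subst h0; simp [encodeNat_zero]
    · rw [if_neg h0]
      have hlt : n / 2 < n := Nat.div_lt_self (Nat.pos_of_ne_zero h0) one_lt_two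
      have hget : ((List.range n).map Computability.encodeNat).getD (n / 2) []
          = Computability.encodeNat (n / 2) := by
        rw [List.getD_eq_getElem?_getD, List.getElem?_map, List.getElem?_range hlt]
        rfl
      rw [hget]
      conv_rhs => rw [encodeNat_eq n]
      rw [if_neg h0]

theorem final_primrec (g : Bool → Fin (nΔ tm)) (w : List (Fin (nΔ tm)))
    (T : ℕ → ℕ) (hT : Primrec T) :
    Primrec fun a : ℕ => decide (((simStep tm)^[T a]
      ((some (eΛ tm tm.main), eσ tm tm.initialState,
        fun i => if i = eK tm tm.k₀ then (Computability.encodeNat a).map g else []) :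
          Cfg' tm)).2.2 (eK tm tm.k₁) = w) := by
  have hmap : Primrec fun a : ℕ => (Computability.encodeNat a).map g :=
    Primrec.list_map encodeNat_primrec ((Primrec.dom_finite g).comp Primrec.snd)
  have hstk : Primrec fun a : ℕ => (fun i : Fin (nK tm) =>
      if i = eK tm tm.k₀ then (Computability.encodeNat a).map g else []) :=
    Primrec.fin_curry.2 (Primrec.ite (Primrec.eq.comp Primrec.snd (Primrec.const _))
      (hmap.comp Primrec.fst) (Primrec.const []))
  have hinit : Primrec fun a : ℕ => ((some (eΛ tm tm.main), eσ tm tm.initialState,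
      fun i : Fin (nK tm) =>
        if i = eK tm tm.k₀ then (Computability.encodeNat a).map g else []) : Cfg' tm) :=
    (Primrec.const _).pair ((Primrec.const _).pair hstk)
  have hiter := Primrec.nat_iterate hT hinit ((simStep_primrec tm).comp Primrec.snd).to₂
  exact (Primrec.eq.comp
    (Primrec.fin_app.comp (Primrec.snd.comp (Primrec.snd.comp hiter)) (Primrec.const _))
    (Primrec.const w)).decide

end

end PTC

theorem polyTime_computable_implies_computable (f : ℕ → Bool)
    (h : Turing.TM2ComputableInPolyTime Computability.encodingNatBool.encode
      Computability.encodingBoolBool.encode f) :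
    Computable f := by
  classical
  let tm := h.tm
  let inA : tm.Γ tm.k₀ ≃ Bool := h.inputAlphabet
  let outA : tm.Γ tm.k₁ ≃ Bool := h.outputAlphabet
  let g : Bool → Fin (PTC.nΔ tm) := fun b => PTC.encΔ tm tm.k₀ (inA.symm b)
  let w : List (Fin (PTC.nΔ tm)) := [PTC.encΔ tm tm.k₁ (outA.symm true)]
  let T : ℕ → ℕ := fun a => h.time.eval (a + 1)
  have hT : Primrec T := (PTC.polyEval_primrec h.time).comp Primrec.succ
  apply Primrec.to_comp
  refine (PTC.final_primrec tm g w T hT).of_eq fun a => ?_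
  -- the input and output word
  set L : List (tm.Γ tm.k₀) := List.map inA.invFun (Computability.encodeNat a) with hLdef
  set OUT : List (tm.Γ tm.k₁) := List.map outA.invFun (Computability.encodeBool (f a)) with hOUT
  obtain ⟨⟨nsteps, hsteps⟩, hle⟩ := h.outputsFun a
  have hlen : (Computability.encodeNat a).length ≤ a + 1 := PTC.encodeNat_length_le a
  have hsteps_le : nsteps ≤ T a :=
    le_trans hle ((PTC.polyEval_mono h.time) hlen)
  have hreal : (PTC.realStep tm)^[T a] (Turing.initList tm L) = Turing.haltList tm OUT := by
    refine PTC.realStep_of_evalsTo_le tm ?_ ?_ hsteps_le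
    · exact hsteps
    · rfl
  have hgood := PTC.simStep_iterate tm (T a) (Turing.initList tm L) (PTC.goodStk_init tm L)
  rw [hreal] at hgood
  have hOUTeq : OUT = [outA.symm (f a)] := rfl
  have hmem : outA.symm (f a) ∈ PTC.elems tm tm.k₁ := by
    have h2 := hgood.1 tm.k₁ (outA.symm (f a))
    rw [PTC.haltList_stk₁, hOUTeq] at h2
    exact h2 (List.mem_cons_self)
  have hLmap : L.map (PTC.encΔ tm tm.k₀) = (Computability.encodeNat a).map g := by
    rw [hLdef, List.map_map]
    rfl
  have htuple : ((some (PTC.eΛ tm tm.main), PTC.eσ tm tm.initialState,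
      fun i => if i = PTC.eK tm tm.k₀ then (Computability.encodeNat a).map g else []) :
        PTC.Cfg' tm) = PTC.encC tm (Turing.initList tm L) := by
    rw [PTC.encC_init tm L, hLmap]
  rw [htuple, hgood.2]
  have hstk : (PTC.encC tm (Turing.haltList tm OUT)).2.2 (PTC.eK tm tm.k₁)
      = [PTC.encΔ tm tm.k₁ (outA.symm (f a))] := by
    show PTC.encS tm (Turing.haltList tm OUT).stk (PTC.eK tm tm.k₁) = _
    rw [PTC.encS_apply, PTC.haltList_stk₁, hOUTeq]
    rfl
  rw [hstk]
  cases hfa : f a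
  · rw [hfa] at hmem
    apply decide_eq_false
    intro heq
    have h3 : PTC.encΔ tm tm.k₁ (outA.symm false) = PTC.encΔ tm tm.k₁ (outA.symm true) := by
      simpa [w] using heq
    have h4 := PTC.encΔ_inj tm hmem h3
    exact Bool.noConfusion (outA.symm.injective h4)
  · apply decide_eq_true
    rfl
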